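/- No stochastic Gronwall with non-predictable H and moments of order α < 1: for all p, α ∈ (0,1) there is no finite constant c_{p,α} such that E[(Z*_{q,α}(1))^p] ≤ c_{p,α} (E[(H_{q,α}(1))^α])^{p/α} holds for all q ∈ (0,1), where Z_{q,α}(t) = M_{q,α}(t) + H_{q,α}(t), M_{q,α}(t) = 1_{[1,∞)}(t) S_{q,α} is a martingale with E[S_{q,α}] = 0, and H_{q,α}(t) = 1_{[1,∞)}(t)(S_{q,α})_-. -/

import Mathlib

/-!
Realise `S_{q,α}` on `Bool`, with `true` of probability `q`. Then `E[(S_{q,α})₋^α] = 1` for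
every `q`, while `E[(S_{q,α})₊^p] = (1-q)^{(1-1/α)p} q^{1-p}`, whose exponent at `1 - q` is
negative, so it blows up as `q → 1⁻` and cannot stay below a fixed `c`.
-/

open MeasureTheory Set Filter Topology

noncomputable def coinMeasure (q : ℝ) : Measure Bool :=
  ENNReal.ofReal q • Measure.dirac true + ENNReal.ofReal (1 - q) • Measure.dirac false

section coinMeasure

variable {q : ℝ}

lemma isProbabilityMeasure_coinMeasure (hq0 : 0 ≤ q) (hq1 : q ≤ 1) :
    IsProbabilityMeasure (coinMeasure q) := by
  constructor
  simp [coinMeasure, ← ENNReal.ofReal_add hq0 (sub_nonneg.2 hq1)]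

lemma coinMeasure_singleton_true : coinMeasure q {true} = ENNReal.ofReal q := by
  simp [coinMeasure]

lemma integral_coinMeasure (hq0 : 0 ≤ q) (hq1 : q ≤ 1) (f : Bool → ℝ) :
    ∫ ω, f ω ∂coinMeasure q = q * f true + (1 - q) * f false := by
  have := isProbabilityMeasure_coinMeasure hq0 hq1
  rw [integral_fintype .of_finite]
  simp [coinMeasure, measureReal_def, ENNReal.toReal_ofReal hq0,
    ENNReal.toReal_ofReal (sub_nonneg.2 hq1)]

end coinMeasure

noncomputable def jumpVariable (α q : ℝ) : Bool → ℝ := fun ω =>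
  if ω then (1 - q) ^ (1 - 1 / α) / q else -((1 - q) ^ (-(1 / α)))

section jumpVariable

variable {α q : ℝ}

lemma jumpVariable_eq_or (ω : Bool) :
    jumpVariable α q ω = (1 - q) ^ (1 - 1 / α) / q ∨
      jumpVariable α q ω = -((1 - q) ^ (-(1 / α))) := by
  cases ω <;> simp [jumpVariable]

lemma coinMeasure_jumpVariable_eq (hq0 : 0 < q) (hq1 : q < 1) :
    coinMeasure q {ω | jumpVariable α q ω = (1 - q) ^ (1 - 1 / α) / q} = ENNReal.ofReal q := by
  have hne : -((1 - q) ^ (-(1 / α))) ≠ (1 - q) ^ (1 - 1 / α) / q := by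
    have := sub_pos.2 hq1
    exact ((neg_neg_of_pos (by positivity)).trans (by positivity)).ne
  have : {ω | jumpVariable α q ω = (1 - q) ^ (1 - 1 / α) / q} = {true} := by
    ext (_ | _)
    · simpa [jumpVariable] using hne
    · simp [jumpVariable]
  rw [this, coinMeasure_singleton_true]

lemma integral_posPart_rpow_jumpVariable {p : ℝ} (hp : p ≠ 0) (hq0 : 0 < q) (hq1 : q ≤ 1) :
    ∫ ω, max (jumpVariable α q ω) 0 ^ p ∂coinMeasure q =
      (1 - q) ^ ((1 - 1 / α) * p) * q ^ (1 - p) := by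
  have h1q : 0 ≤ 1 - q := sub_nonneg.2 hq1
  have hneg : -((1 - q) ^ (-(1 / α))) ≤ 0 := neg_nonpos.2 (by positivity)
  rw [integral_coinMeasure hq0.le hq1]
  simp only [jumpVariable, if_true, Bool.false_eq_true, if_false]
  rw [max_eq_left (by positivity), max_eq_right hneg, Real.zero_rpow hp, mul_zero, add_zero,
    Real.div_rpow (by positivity) hq0.le, ← Real.rpow_mul h1q, Real.rpow_sub hq0, Real.rpow_one]
  field_simp

lemma integral_negPart_rpow_jumpVariable (hα : α ≠ 0) (hq0 : 0 ≤ q) (hq1 : q < 1) :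
    ∫ ω, max (-jumpVariable α q ω) 0 ^ α ∂coinMeasure q = 1 := by
  have h1q : 0 < 1 - q := sub_pos.2 hq1
  rw [integral_coinMeasure hq0 hq1.le]
  simp only [jumpVariable, if_true, Bool.false_eq_true, if_false, neg_neg]
  rw [max_eq_right (neg_nonpos.2 (by positivity)), max_eq_left (by positivity),
    Real.zero_rpow hα, mul_zero, zero_add, ← Real.rpow_mul h1q.le, neg_mul,
    one_div_mul_cancel hα, Real.rpow_neg_one, mul_inv_cancel₀ h1q.ne']

end jumpVariable

lemma tendsto_one_sub_rpow_mul_rpow_nhdsLT_one {r : ℝ} (hr : r < 0) (s : ℝ) :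
    Tendsto (fun q : ℝ => (1 - q) ^ r * q ^ s) (𝓝[<] 1) atTop := by
  have h1q : Tendsto (fun q : ℝ => 1 - q) (𝓝[<] 1) (𝓝[>] 0) := by
    refine tendsto_nhdsWithin_of_tendsto_nhds_of_eventually_within _ ?_ ?_
    · exact ((continuous_const.sub continuous_id).tendsto' 1 0 (sub_self 1)).mono_left
        nhdsWithin_le_nhds
    · filter_upwards [self_mem_nhdsWithin] with q (hq : q < 1) using sub_pos.2 hq
  have hqs : Tendsto (fun q : ℝ => q ^ s) (𝓝[<] 1) (𝓝 1) := by
    simpa using ((Real.continuousAt_rpow_const 1 s (Or.inl one_ne_zero)).tendsto).mono_left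
      nhdsWithin_le_nhds
  exact ((tendsto_rpow_neg_nhdsGT_zero hr).comp h1q).atTop_mul_pos one_pos hqs

/-- No stochastic Gronwall inequality with non-predictable `H` and moments of order `α < 1`:
for `p, α ∈ (0,1)` there is no finite constant `c` such that
`E[(Z*_{q,α}(1))^p] = E[(S_{q,α})₊^p] ≤ c (E[(H_{q,α}(1))^α])^{p/α} = c (E[(S_{q,α})₋^α])^{p/α}`
holds for every `q ∈ (0,1)` and every random variable `S_{q,α}` taking the value
`(1-q)^(1-1/α) q⁻¹` with probability `q` and `-(1-q)^(-1/α)` with probability `1-q`. -/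
theorem no_uniform_stochastic_gronwall (p α : ℝ) (hp : p ∈ Set.Ioo (0:ℝ) 1)
    (hα : α ∈ Set.Ioo (0:ℝ) 1) :
    ¬ ∃ c : ℝ, ∀ (Ω : Type) (mΩ : MeasurableSpace Ω) (μ : Measure Ω),
      IsProbabilityMeasure μ → ∀ (S : Ω → ℝ) (q : ℝ), q ∈ Set.Ioo (0:ℝ) 1 →
        Measurable S →
        (∀ ω, S ω = (1 - q) ^ (1 - 1 / α) / q ∨ S ω = -((1 - q) ^ (-(1 / α)))) →
        μ {ω | S ω = (1 - q) ^ (1 - 1 / α) / q} = ENNReal.ofReal q →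
        ∫ ω, (max (S ω) 0) ^ p ∂μ ≤ c * (∫ ω, (max (-S ω) 0) ^ α ∂μ) ^ (p / α) := by
  rintro ⟨c, hc⟩
  have hexp : (1 - 1 / α) * p < 0 :=
    mul_neg_of_neg_of_pos (sub_neg.2 (one_lt_one_div hα.1 hα.2)) hp.1
  obtain ⟨q, hcq, hq⟩ :=
    (((tendsto_one_sub_rpow_mul_rpow_nhdsLT_one hexp (1 - p)).eventually_gt_atTop c).and
      (Ioo_mem_nhdsLT one_pos)).exists
  have key := hc Bool _ (coinMeasure q) (isProbabilityMeasure_coinMeasure hq.1.le hq.2.le)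
    (jumpVariable α q) q hq (measurable_of_finite _) jumpVariable_eq_or
    (coinMeasure_jumpVariable_eq hq.1 hq.2)
  rw [integral_posPart_rpow_jumpVariable hp.1.ne' hq.1 hq.2.le,
    integral_negPart_rpow_jumpVariable hα.1.ne' hq.1.le hq.2, Real.one_rpow, mul_one] at key
  linarith
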